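/- For every t ∈ (0,1), set A(t) = (t σ(t)(β'(t)σ(t) − β(t)σ'(t)))^{−1}, α(t) = β(t)A(t)/2, and γ(t) = 1 − α(t)σ(t)². Then α(t) > 0 and |γ(t)|/α(t) = g^F(t)², where g^F(t)² = |2tσ(t)² (β'(t)/β(t) − 1/(2t) − σ'(t)/σ(t))| = |2tσ(t)(β'(t)σ(t)/β(t) − σ'(t)) − σ(t)²|. Consequently, whenever γ(t) ≠ 0, the unique minimizer over u > 0 of u ↦ u^{−1}(γ(t) + α(t)u)² is u = g^F(t)². -/

import Mathlib

/-! On `(0,1)` strict monotonicity gives `β > 0` and `σ > 0`, hence `β'σ − βσ' > 0` and `α > 0`.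
Clearing denominators shows `γ(t) = α(t) E(t)` with
`E(t) = 2tσ(t)(β'(t)σ(t)/β(t) − σ'(t)) − σ(t)²`, so `|γ|/α = |E| = g^F(t)²` once `α(t) > 0`.
For the minimization, `c := |γ|` satisfies `c² = γ²`, whence
`(γ + αu)²/u = (c − αu)²/u + 2α(γ + c)`: the right side is smallest exactly when `αu = c`. -/

open Set

noncomputable section

/-- `A(t) = (t σ(t)(β'(t)σ(t) − β(t)σ'(t)))⁻¹`. -/
def coefA (β σ : ℝ → ℝ) (t : ℝ) : ℝ :=
  (t * σ t * (deriv β t * σ t - β t * deriv σ t))⁻¹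

/-- `α(t) = β(t) A(t) / 2`. -/
def coefAlpha (β σ : ℝ → ℝ) (t : ℝ) : ℝ := β t * coefA β σ t / 2

/-- `γ(t) = 1 − α(t) σ(t)²`. -/
def coefGamma (β σ : ℝ → ℝ) (t : ℝ) : ℝ := 1 - coefAlpha β σ t * σ t ^ 2

/-- The squared Föllmer diffusion coefficient
`g^F(t)² = |2tσ(t)²(β'(t)/β(t) − 1/(2t) − σ'(t)/σ(t))|`. -/
def gFsq (β σ : ℝ → ℝ) (t : ℝ) : ℝ :=
  |2 * t * σ t ^ 2 * (deriv β t / β t - 1 / (2 * t) - deriv σ t / σ t)|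

section Monotone

variable {D : Set ℝ} {f : ℝ → ℝ}

/-- `deriv f x ≠ 0` already forces differentiability at `x`, since `deriv` is junk `0` elsewhere. -/
theorem strictMonoOn_of_forall_deriv_pos (hD : Convex ℝ D) (hf : ∀ x ∈ D, 0 < deriv f x) :
    StrictMonoOn f D :=
  strictMonoOn_of_deriv_pos hD
    (fun x hx => (differentiableAt_of_deriv_ne_zero (hf x hx).ne').continuousAt.continuousWithinAt)
    fun x hx => hf x (interior_subset hx)

theorem strictAntiOn_of_forall_deriv_neg (hD : Convex ℝ D) (hf : ∀ x ∈ D, deriv f x < 0) :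
    StrictAntiOn f D :=
  strictAntiOn_of_deriv_neg hD
    (fun x hx => (differentiableAt_of_deriv_ne_zero (hf x hx).ne).continuousAt.continuousWithinAt)
    fun x hx => hf x (interior_subset hx)

end Monotone

section Minimization

variable {γ α u : ℝ}

theorem sq_add_mul_div_eq (γ α : ℝ) (hu : u ≠ 0) :
    (γ + α * u) ^ 2 / u = (|γ| - α * u) ^ 2 / u + 2 * α * (γ + |γ|) := by
  have key : (γ + α * u) ^ 2 = (|γ| - α * u) ^ 2 + 2 * α * (γ + |γ|) * u := by
    linear_combination -sq_abs γ
  rw [key, add_div, mul_div_cancel_right₀ _ hu]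

theorem sq_add_mul_div_abs_div_eq (hα : 0 < α) (hγ : γ ≠ 0) :
    (γ + α * (|γ| / α)) ^ 2 / (|γ| / α) = 2 * α * (γ + |γ|) := by
  have hm : |γ| / α ≠ 0 := div_ne_zero (abs_ne_zero.2 hγ) hα.ne'
  rw [sq_add_mul_div_eq γ α hm, mul_div_cancel₀ _ hα.ne', sub_self]
  simp

theorem sq_add_mul_div_abs_div_le (hα : 0 < α) (hγ : γ ≠ 0) (hu : 0 < u) :
    (γ + α * (|γ| / α)) ^ 2 / (|γ| / α) ≤ (γ + α * u) ^ 2 / u := by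
  rw [sq_add_mul_div_abs_div_eq hα hγ, sq_add_mul_div_eq γ α hu.ne']
  have hgap := div_nonneg (sq_nonneg (|γ| - α * u)) hu.le
  linarith

theorem eq_abs_div_of_sq_add_mul_div_eq (hα : 0 < α) (hγ : γ ≠ 0) (hu : 0 < u)
    (h : (γ + α * u) ^ 2 / u = (γ + α * (|γ| / α)) ^ 2 / (|γ| / α)) : u = |γ| / α := by
  rw [sq_add_mul_div_abs_div_eq hα hγ, sq_add_mul_div_eq γ α hu.ne', add_eq_right,
    div_eq_zero_iff, sq_eq_zero_iff, sub_eq_zero] at h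
  rcases h with h | h
  · rw [h, mul_div_cancel_left₀ _ hα.ne']
  · exact absurd h hu.ne'

end Minimization

section Coefficients

variable {β σ : ℝ → ℝ} {t : ℝ}

theorem gFsq_eq_abs (ht : t ≠ 0) (hσ : σ t ≠ 0) :
    gFsq β σ t = |2 * t * σ t * (deriv β t * σ t / β t - deriv σ t) - σ t ^ 2| := by
  unfold gFsq
  congr 1
  field_simp
  ring

theorem coefAlpha_pos (ht : 0 < t) (hβ : 0 < β t) (hσ : 0 < σ t)
    (hD : 0 < deriv β t * σ t - β t * deriv σ t) : 0 < coefAlpha β σ t := by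
  unfold coefAlpha coefA
  positivity

theorem coefGamma_eq_coefAlpha_mul (ht : t ≠ 0) (hβ : β t ≠ 0) (hσ : σ t ≠ 0)
    (hD : deriv β t * σ t - β t * deriv σ t ≠ 0) :
    coefGamma β σ t =
      coefAlpha β σ t * (2 * t * σ t * (deriv β t * σ t / β t - deriv σ t) - σ t ^ 2) := by
  unfold coefGamma coefAlpha coefA
  field_simp
  linear_combination -2 * t * mul_inv_cancel₀ hD

end Coefficients

theorem follmer_coefficient_minimizer_general (β σ : ℝ → ℝ)
    (hβ0 : β 0 = 0) (hσ1 : σ 1 = 0)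
    (hβ' : ∀ t ∈ Icc (0:ℝ) 1, 0 < deriv β t)
    (hσ' : ∀ t ∈ Icc (0:ℝ) 1, deriv σ t < 0) :
    ∀ t ∈ Ioo (0:ℝ) 1,
      0 < coefAlpha β σ t ∧
      |coefGamma β σ t| / coefAlpha β σ t = gFsq β σ t ∧
      gFsq β σ t = |2 * t * σ t * (deriv β t * σ t / β t - deriv σ t) - σ t ^ 2| ∧
      (coefGamma β σ t ≠ 0 →
        (∀ u : ℝ, 0 < u →
          (coefGamma β σ t + coefAlpha β σ t * gFsq β σ t) ^ 2 / gFsq β σ t ≤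
            (coefGamma β σ t + coefAlpha β σ t * u) ^ 2 / u) ∧
        (∀ u : ℝ, 0 < u →
          (coefGamma β σ t + coefAlpha β σ t * u) ^ 2 / u =
            (coefGamma β σ t + coefAlpha β σ t * gFsq β σ t) ^ 2 / gFsq β σ t →
          u = gFsq β σ t)) := by
  intro t ⟨ht0, ht1⟩
  have htI : t ∈ Icc (0:ℝ) 1 := ⟨ht0.le, ht1.le⟩
  have hβt : 0 < β t := hβ0 ▸ strictMonoOn_of_forall_deriv_pos (convex_Icc 0 1) hβ'
    (left_mem_Icc.2 zero_le_one) htI ht0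
  have hσt : 0 < σ t := hσ1 ▸ strictAntiOn_of_forall_deriv_neg (convex_Icc 0 1) hσ'
    htI (right_mem_Icc.2 zero_le_one) ht1
  have hD : 0 < deriv β t * σ t - β t * deriv σ t :=
    sub_pos.2 ((mul_neg_of_pos_of_neg hβt (hσ' t htI)).trans (mul_pos (hβ' t htI) hσt))
  have hα := coefAlpha_pos ht0 hβt hσt hD
  have hgF := gFsq_eq_abs (β := β) ht0.ne' hσt.ne'
  have hratio : |coefGamma β σ t| / coefAlpha β σ t = gFsq β σ t := by
    rw [coefGamma_eq_coefAlpha_mul ht0.ne' hβt.ne' hσt.ne' hD.ne', abs_mul, abs_of_pos hα,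
      mul_div_cancel_left₀ _ hα.ne', hgF]
  refine ⟨hα, hratio, hgF, fun hγ => ?_⟩
  rw [← hratio]
  exact ⟨fun u hu => sq_add_mul_div_abs_div_le hα hγ hu,
    fun u hu => eq_abs_div_of_sq_add_mul_div_eq hα hγ hu⟩

/-- `α(t) > 0`, `|γ(t)|/α(t) = g^F(t)²` with both closed forms, and whenever
`γ(t) ≠ 0` the map `u ↦ u⁻¹(γ(t) + α(t)u)²` is uniquely minimized over `u > 0` at
`u = g^F(t)²`. -/
theorem follmer_coefficient_minimizer (β σ : ℝ → ℝ)
    (hβC : ContDiff ℝ 1 β) (hσC : ContDiff ℝ 1 σ)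
    (hβ0 : β 0 = 0) (hβ1 : β 1 = 1) (hσ0 : 0 < σ 0) (hσ1 : σ 1 = 0)
    (hβ' : ∀ t ∈ Icc (0:ℝ) 1, 0 < deriv β t)
    (hσ' : ∀ t ∈ Icc (0:ℝ) 1, deriv σ t < 0) :
    ∀ t ∈ Ioo (0:ℝ) 1,
      0 < coefAlpha β σ t ∧
      |coefGamma β σ t| / coefAlpha β σ t = gFsq β σ t ∧
      gFsq β σ t = |2 * t * σ t * (deriv β t * σ t / β t - deriv σ t) - σ t ^ 2| ∧
      (coefGamma β σ t ≠ 0 →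
        (∀ u : ℝ, 0 < u →
          (coefGamma β σ t + coefAlpha β σ t * gFsq β σ t) ^ 2 / gFsq β σ t ≤
            (coefGamma β σ t + coefAlpha β σ t * u) ^ 2 / u) ∧
        (∀ u : ℝ, 0 < u →
          (coefGamma β σ t + coefAlpha β σ t * u) ^ 2 / u =
            (coefGamma β σ t + coefAlpha β σ t * gFsq β σ t) ^ 2 / gFsq β σ t →
          u = gFsq β σ t)) :=
  follmer_coefficient_minimizer_general β σ hβ0 hσ1 hβ' hσ'
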